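/- arXiv:1704.01879 — 3 statements merged into one kernel-verified Lean document; each statement's English description precedes it below -/
import Mathlib

section
/- For every ε > 0, ρ ∈ (0,1] and u ≥ 0, one has χ_{ε,ρ}(u) ≤ u^ρ/ρ². In particular, for u ranging in any bounded interval the functions χ_{ε,ρ} are bounded above by a constant independent of ε. -/
open MeasureTheory

/-- The Guenancia–Păun regularizing function. -/
noncomputable def chi (ε ρ u : ℝ) : ℝ :=
  (1 / ρ) * ∫ r in (0 : ℝ)..u, ((ε ^ 2 + r) ^ ρ - ε ^ (2 * ρ)) / r

lemma real_rpow_add_le {a b ρ : ℝ} (ha : 0 ≤ a) (hb : 0 ≤ b) (hρ0 : 0 ≤ ρ) (hρ1 : ρ ≤ 1) :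
    (a + b) ^ ρ ≤ a ^ ρ + b ^ ρ := by
  lift a to NNReal using ha
  lift b to NNReal using hb
  have := NNReal.rpow_add_le_add_rpow a b hρ0 hρ1
  push_cast [← NNReal.coe_rpow] at this ⊢
  exact_mod_cast this

/-- For every `ε > 0`, `ρ ∈ (0,1]` and `u ≥ 0`, one has `χ_{ε,ρ}(u) ≤ u^ρ/ρ²`.
In particular, on any bounded interval the functions `χ_{ε,ρ}` are bounded above by a
constant independent of `ε`. -/
theorem chi_le_rpow_div_sq
    (ρ : ℝ) (hρ0 : 0 < ρ) (hρ1 : ρ ≤ 1) :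
    (∀ ε u : ℝ, 0 < ε → 0 ≤ u → chi ε ρ u ≤ u ^ ρ / ρ ^ 2) ∧
    ∀ M : ℝ, 0 < M → ∃ C : ℝ, ∀ ε u : ℝ, 0 < ε → u ∈ Set.Icc (0 : ℝ) M →
      chi ε ρ u ≤ C := by
  have main : ∀ ε u : ℝ, 0 < ε → 0 ≤ u → chi ε ρ u ≤ u ^ ρ / ρ ^ 2 := by
    intro ε u hε hu
    have hrhs : 0 ≤ u ^ ρ / ρ ^ 2 :=
      div_nonneg (Real.rpow_nonneg hu ρ) (sq_nonneg ρ)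
    unfold chi
    by_cases hint : IntervalIntegrable
        (fun r => ((ε ^ 2 + r) ^ ρ - ε ^ (2 * ρ)) / r) volume 0 u
    · -- compare with r ^ (ρ - 1)
      have hg : IntervalIntegrable (fun r : ℝ => r ^ (ρ - 1)) volume 0 u :=
        intervalIntegral.intervalIntegrable_rpow' (by linarith)
      have hpt : ∀ r ∈ Set.Icc (0 : ℝ) u,
          ((ε ^ 2 + r) ^ ρ - ε ^ (2 * ρ)) / r ≤ r ^ (ρ - 1) := by
        intro r hr
        rcases eq_or_lt_of_le hr.1 with h0 | h0
        · simp only [← h0, div_zero]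
          positivity
        · have hε2 : (0:ℝ) < ε ^ 2 := by positivity
          have hnum : (ε ^ 2 + r) ^ ρ - ε ^ (2 * ρ) ≤ r ^ ρ := by
            have h1 : (ε ^ 2 + r) ^ ρ ≤ (ε ^ 2) ^ ρ + r ^ ρ :=
              real_rpow_add_le hε2.le h0.le hρ0.le hρ1
            have h2 : (ε ^ 2) ^ ρ = ε ^ (2 * ρ) := by
              rw [← Real.rpow_natCast ε 2, ← Real.rpow_mul hε.le]
              norm_num
            linarith
          calc ((ε ^ 2 + r) ^ ρ - ε ^ (2 * ρ)) / r ≤ r ^ ρ / r :=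
                div_le_div_of_nonneg_right hnum h0.le
            _ = r ^ (ρ - 1) := by
                rw [Real.rpow_sub h0, Real.rpow_one]
      have hmono := intervalIntegral.integral_mono_on hu hint hg hpt
      have hval : ∫ r in (0:ℝ)..u, r ^ (ρ - 1) = u ^ ρ / ρ := by
        rw [integral_rpow (Or.inl (by linarith))]
        rw [sub_add_cancel, Real.zero_rpow hρ0.ne']
        ring_nf
      rw [hval] at hmono
      have : (1 / ρ) * ∫ r in (0:ℝ)..u, ((ε ^ 2 + r) ^ ρ - ε ^ (2 * ρ)) / r
          ≤ (1 / ρ) * (u ^ ρ / ρ) := by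
        apply mul_le_mul_of_nonneg_left hmono
        positivity
      calc (1 / ρ) * ∫ r in (0:ℝ)..u, ((ε ^ 2 + r) ^ ρ - ε ^ (2 * ρ)) / r
          ≤ (1 / ρ) * (u ^ ρ / ρ) := this
        _ = u ^ ρ / ρ ^ 2 := by rw [sq, one_div, ← div_div, div_eq_inv_mul]; ring
    · rw [intervalIntegral.integral_undef hint, mul_zero]
      exact hrhs
  refine ⟨main, fun M hM => ⟨M ^ ρ / ρ ^ 2, fun ε u hε hu => ?_⟩⟩
  calc chi ε ρ u ≤ u ^ ρ / ρ ^ 2 := main ε u hε hu.1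
    _ ≤ M ^ ρ / ρ ^ 2 := by
        apply div_le_div_of_nonneg_right _ (by positivity)
        exact Real.rpow_le_rpow hu.1 hu.2 hρ0.le
end

section
/- For every ρ ∈ (0,1] and every M > 0, the convergence χ_{ε,ρ} → (u ↦ u^ρ/ρ²) as ε → 0⁺ is uniform on [0,M]: sup_{u ∈ [0,M]} |χ_{ε,ρ}(u) − u^ρ/ρ²| tends to 0 as ε → 0⁺. -/
open MeasureTheory Filter

/-!
With `δ = ε²`, subadditivity and monotonicity of `x ↦ x ^ ρ` give
`|(δ + r) ^ ρ - δ ^ ρ - r ^ ρ| ≤ min (δ ^ ρ) (r ^ ρ) ≤ ε ^ ρ * r ^ (ρ / 2)`, so the integrand of `χ`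
differs from `r ^ (ρ - 1)` by at most `ε ^ ρ * r ^ (ρ / 2 - 1)`. Integrating yields the explicit rate
`|χ_{ε,ρ}(u) - u ^ ρ / ρ ^ 2| ≤ 2 / ρ ^ 2 * u ^ (ρ / 2) * ε ^ ρ`, which is uniform on `[0, M]`.
-/

open Set

lemma abs_rpow_add_sub_rpow_sub_rpow_le {a b p : ℝ} (ha : 0 ≤ a) (hb : 0 ≤ b) (hp0 : 0 ≤ p)
    (hp1 : p ≤ 1) : |(a + b) ^ p - a ^ p - b ^ p| ≤ a ^ (p / 2) * b ^ (p / 2) := by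
  have hsub : (a + b) ^ p ≤ a ^ p + b ^ p := Real.rpow_add_le_add_rpow ha hb hp0 hp1
  have ha_le : a ^ p ≤ (a + b) ^ p := Real.rpow_le_rpow ha (by linarith) hp0
  have hb_le : b ^ p ≤ (a + b) ^ p := Real.rpow_le_rpow hb (by linarith) hp0
  have hsplit : ∀ x : ℝ, 0 ≤ x → x ^ p = x ^ (p / 2) * x ^ (p / 2) := fun x hx => by
    rw [← Real.rpow_add_of_nonneg hx (by linarith) (by linarith), add_halves]
  have hmin : min (a ^ p) (b ^ p) ≤ a ^ (p / 2) * b ^ (p / 2) := by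
    rcases le_total a b with hab | hab
    · calc min (a ^ p) (b ^ p) ≤ a ^ (p / 2) * a ^ (p / 2) :=
            (min_le_left _ _).trans_eq (hsplit a ha)
        _ ≤ a ^ (p / 2) * b ^ (p / 2) := by gcongr
    · calc min (a ^ p) (b ^ p) ≤ b ^ (p / 2) * b ^ (p / 2) :=
            (min_le_right _ _).trans_eq (hsplit b hb)
        _ ≤ a ^ (p / 2) * b ^ (p / 2) := by gcongr
  rw [abs_le]
  constructor
  · rcases min_choice (a ^ p) (b ^ p) with h | h <;> rw [h] at hmin <;> linarith
  · have : 0 ≤ a ^ (p / 2) * b ^ (p / 2) := by positivity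
    linarith

lemma abs_chi_integrand_sub_rpow_le {ε ρ r : ℝ} (hε : 0 ≤ ε) (hρ0 : 0 ≤ ρ) (hρ1 : ρ ≤ 1)
    (hr : 0 < r) :
    |((ε ^ 2 + r) ^ ρ - ε ^ (2 * ρ)) / r - r ^ (ρ - 1)| ≤ ε ^ ρ * r ^ (ρ / 2 - 1) := by
  have hsq : ε ^ (2 * ρ) = (ε ^ 2) ^ ρ := by
    rw [Real.rpow_mul hε, Real.rpow_two]
  have hsq_half : (ε ^ 2) ^ (ρ / 2) = ε ^ ρ := by
    rw [← Real.rpow_two, ← Real.rpow_mul hε]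
    ring_nf
  calc |((ε ^ 2 + r) ^ ρ - ε ^ (2 * ρ)) / r - r ^ (ρ - 1)|
      = |(ε ^ 2 + r) ^ ρ - (ε ^ 2) ^ ρ - r ^ ρ| / r := by
        rw [hsq, Real.rpow_sub_one hr.ne', ← sub_div, abs_div, abs_of_pos hr]
    _ ≤ ε ^ ρ * r ^ (ρ / 2) / r := by
        gcongr
        rw [← hsq_half]
        exact abs_rpow_add_sub_rpow_sub_rpow_le (sq_nonneg ε) hr.le hρ0 hρ1
    _ = ε ^ ρ * r ^ (ρ / 2 - 1) := by
        rw [Real.rpow_sub_one hr.ne', mul_div_assoc]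

lemma integral_rpow_sub_one {s : ℝ} (hs : 0 < s) (u : ℝ) :
    ∫ r in (0 : ℝ)..u, r ^ (s - 1) = u ^ s / s := by
  rw [integral_rpow (Or.inl (by linarith)), sub_add_cancel, Real.zero_rpow hs.ne', sub_zero]

lemma abs_chi_sub_rpow_div_le {ε ρ u : ℝ} (hε : 0 ≤ ε) (hρ0 : 0 < ρ) (hρ1 : ρ ≤ 1) (hu : 0 ≤ u) :
    |chi ε ρ u - u ^ ρ / ρ ^ 2| ≤ 2 / ρ ^ 2 * u ^ (ρ / 2) * ε ^ ρ := by
  set err : ℝ → ℝ := fun r => ((ε ^ 2 + r) ^ ρ - ε ^ (2 * ρ)) / r - r ^ (ρ - 1)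
  set bound : ℝ → ℝ := fun r => ε ^ ρ * r ^ (ρ / 2 - 1)
  have herr_le : ∀ r ∈ Ioc 0 u, ‖err r‖ ≤ bound r := fun r hr =>
    abs_chi_integrand_sub_rpow_le hε hρ0.le hρ1 hr.1
  have hbound_int : IntervalIntegrable bound volume 0 u :=
    (intervalIntegral.intervalIntegrable_rpow' (by linarith)).const_mul _
  have hpow_int : IntervalIntegrable (fun r : ℝ => r ^ (ρ - 1)) volume 0 u :=
    intervalIntegral.intervalIntegrable_rpow' (by linarith)
  have herr_int : IntervalIntegrable err volume 0 u := by
    refine hbound_int.mono_fun' (by fun_prop) ?_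
    rw [uIoc_of_le hu, EventuallyLE, ae_restrict_iff' measurableSet_Ioc]
    exact ae_of_all _ herr_le
  have hchi : chi ε ρ u - u ^ ρ / ρ ^ 2 = 1 / ρ * ∫ r in (0 : ℝ)..u, err r := by
    have hsplit : ∫ r in (0 : ℝ)..u, ((ε ^ 2 + r) ^ ρ - ε ^ (2 * ρ)) / r =
        (∫ r in (0 : ℝ)..u, err r) + ∫ r in (0 : ℝ)..u, r ^ (ρ - 1) := by
      rw [← intervalIntegral.integral_add herr_int hpow_int]
      simp only [err, sub_add_cancel]
    rw [chi, hsplit, integral_rpow_sub_one hρ0]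
    field_simp
    ring
  calc |chi ε ρ u - u ^ ρ / ρ ^ 2| = 1 / ρ * ‖∫ r in (0 : ℝ)..u, err r‖ := by
        rw [hchi, abs_mul, abs_of_pos (by positivity), Real.norm_eq_abs]
    _ ≤ 1 / ρ * ∫ r in (0 : ℝ)..u, bound r := by
        gcongr
        exact intervalIntegral.norm_integral_le_of_norm_le hu (ae_of_all _ herr_le) hbound_int
    _ = 2 / ρ ^ 2 * u ^ (ρ / 2) * ε ^ ρ := by
        simp only [bound, intervalIntegral.integral_const_mul,
          integral_rpow_sub_one (half_pos hρ0)]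
        field_simp

theorem chi_tendstoUniformlyOn_general
    (ρ M : ℝ) (hρ0 : 0 < ρ) (hρ1 : ρ ≤ 1) :
    Tendsto
      (fun ε : ℝ => ⨆ u : Set.Icc (0 : ℝ) M, |chi ε ρ u - (u : ℝ) ^ ρ / ρ ^ 2|)
      (nhdsWithin 0 (Set.Ioi 0)) (nhds 0) := by
  have hrate : Tendsto (fun ε : ℝ => 2 / ρ ^ 2 * |M| ^ (ρ / 2) * ε ^ ρ)
      (nhdsWithin 0 (Ioi 0)) (nhds 0) := by
    simpa [Real.zero_rpow hρ0.ne'] using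
      (((Real.continuous_rpow_const hρ0.le).tendsto 0).mono_left nhdsWithin_le_nhds).const_mul _
  refine squeeze_zero' (Eventually.of_forall fun ε => Real.iSup_nonneg fun u => abs_nonneg _)
    ?_ hrate
  filter_upwards [self_mem_nhdsWithin] with ε (hε : 0 < ε)
  refine Real.iSup_le (fun u => ?_) (by positivity)
  calc |chi ε ρ u - (u : ℝ) ^ ρ / ρ ^ 2| ≤ 2 / ρ ^ 2 * (u : ℝ) ^ (ρ / 2) * ε ^ ρ :=
        abs_chi_sub_rpow_div_le hε.le hρ0 hρ1 u.2.1
    _ ≤ 2 / ρ ^ 2 * |M| ^ (ρ / 2) * ε ^ ρ := by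
        gcongr
        exacts [u.2.1, u.2.2.trans (le_abs_self M)]

/-- For every `ρ ∈ (0,1]` and every `M > 0`, the convergence
`χ_{ε,ρ} → (u ↦ u^ρ/ρ²)` as `ε → 0⁺` is uniform on `[0,M]`: the supremum
`sup_{u ∈ [0,M]} |χ_{ε,ρ}(u) − u^ρ/ρ²|` tends to `0` as `ε → 0⁺`. -/
theorem chi_tendstoUniformlyOn
    (ρ M : ℝ) (hρ0 : 0 < ρ) (hρ1 : ρ ≤ 1) (hM : 0 < M) :
    Tendsto
      (fun ε : ℝ => ⨆ u : Set.Icc (0 : ℝ) M, |chi ε ρ u - (u : ℝ) ^ ρ / ρ ^ 2|)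
      (nhdsWithin 0 (Set.Ioi 0)) (nhds 0) :=
  chi_tendstoUniformlyOn_general ρ M hρ0 hρ1
end

section
/- Let n ≥ 1 and let G, H be n×n complex Hermitian positive definite matrices. Then Re(tr(G⁻¹ · H)) ≤ (1/(n−1)!) · (Re(tr(H⁻¹ · G)))^{n−1} · Re(det H)/Re(det G). -/
/-!
Write `G = Sᴴ S` with `S` invertible and `H = Sᴴ M S`. Then `M` is positive definite,
`tr(G⁻¹H) = tr M`, `tr(H⁻¹G) = tr M⁻¹` and `det H / det G = det M`, so in terms of the
eigenvalues `μᵢ > 0` of `M` the claim reads `∑ μᵢ ≤ (∑ μᵢ⁻¹)ⁿ⁻¹ ∏ μᵢ / (n-1)!`. Dividing by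
`∏ μᵢ`, this is `(n-1)! e_{n-1}(x) ≤ (∑ xᵢ)ⁿ⁻¹` for `xᵢ = μᵢ⁻¹`, which follows, together with
`n! e_n(x) ≤ (∑ xᵢ)ⁿ`, by induction on the number of variables from
`bᵐ⁺¹ + (m+1) a bᵐ ≤ (a+b)ᵐ⁺¹` for `a, b ≥ 0`.
-/

open Finset Nat Matrix
open scoped ComplexOrder MatrixOrder

namespace Finset

variable {R ι : Type*}

theorem sum_prod_erase_cons [CommSemiring R] [DecidableEq ι] (x : ι → R) (a : ι)
    (t : Finset ι) (hat : a ∉ t) :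
    ∑ i ∈ cons a t hat, ∏ j ∈ (cons a t hat).erase i, x j
      = ∏ j ∈ t, x j + x a * ∑ i ∈ t, ∏ j ∈ t.erase i, x j := by
  rw [sum_cons, erase_cons, mul_sum]
  congr 1
  refine sum_congr rfl fun i hi => ?_
  rw [erase_cons_of_ne hat (ne_of_mem_of_not_mem hi hat).symm, prod_cons]

theorem sum_prod_erase_inv [Field R] [DecidableEq ι] {μ : ι → R} (s : Finset ι)
    (hμ : ∀ i ∈ s, μ i ≠ 0) :
    ∑ i ∈ s, ∏ j ∈ s.erase i, (μ j)⁻¹ = (∑ i ∈ s, μ i) / ∏ i ∈ s, μ i := by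
  rw [sum_div]
  refine sum_congr rfl fun i hi => ?_
  rw [prod_inv_distrib, ← mul_prod_erase s μ hi, div_mul_cancel_left₀ (hμ i hi)]

section OrderedSemiring

variable [CommSemiring R] [LinearOrder R] [IsOrderedRing R] [ExistsAddOfLE R] {x : ι → R}

theorem factorial_card_mul_prod_le_sum_pow (s : Finset ι) (hx : ∀ i ∈ s, 0 ≤ x i) :
    (#s)! * ∏ i ∈ s, x i ≤ (∑ i ∈ s, x i) ^ #s := by
  induction s using Finset.cons_induction with
  | empty => simp
  | cons a t hat ih =>
    have hxt : ∀ i ∈ t, 0 ≤ x i := fun i hi => hx i (mem_cons_of_mem hi)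
    have hxa : 0 ≤ x a := hx a (mem_cons_self a t)
    have hS : 0 ≤ ∑ i ∈ t, x i := sum_nonneg hxt
    rw [sum_cons, prod_cons, card_cons, factorial_succ, cast_mul, cast_succ]
    calc (#t + 1) * (#t)! * (x a * ∏ i ∈ t, x i)
        = (#t + 1) * x a * ((#t)! * ∏ i ∈ t, x i) := by ring
      _ ≤ (#t + 1) * x a * (∑ i ∈ t, x i) ^ #t :=
          mul_le_mul_of_nonneg_left (ih hxt)
            (mul_nonneg (add_nonneg (cast_nonneg _) zero_le_one) hxa)
      _ ≤ (∑ i ∈ t, x i) ^ (#t + 1) + (#t + 1) * x a * (∑ i ∈ t, x i) ^ #t :=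
          le_add_of_nonneg_left (pow_nonneg hS _)
      _ ≤ (x a + ∑ i ∈ t, x i) ^ (#t + 1) := by
          simpa [add_comm, mul_right_comm] using
            pow_add_mul_le_add_pow hS (add_nonneg (mul_nonneg zero_le_two hS) hxa) (#t + 1)

theorem factorial_mul_sum_prod_erase_le_sum_pow [DecidableEq ι] (s : Finset ι)
    (hx : ∀ i ∈ s, 0 ≤ x i) :
    (#s - 1)! * ∑ i ∈ s, ∏ j ∈ s.erase i, x j ≤ (∑ i ∈ s, x i) ^ (#s - 1) := by
  induction s using Finset.cons_induction with
  | empty => simp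
  | cons a t hat ih =>
    have hxt : ∀ i ∈ t, 0 ≤ x i := fun i hi => hx i (mem_cons_of_mem hi)
    have hxa : 0 ≤ x a := hx a (mem_cons_self a t)
    have hS : 0 ≤ ∑ i ∈ t, x i := sum_nonneg hxt
    have hprod := factorial_card_mul_prod_le_sum_pow t hxt
    rw [sum_prod_erase_cons, sum_cons, card_cons, Nat.add_sub_cancel]
    obtain ht | ht := eq_or_ne #t 0
    · simp [card_eq_zero.mp ht]
    obtain ⟨k, hk⟩ := Nat.exists_eq_add_one_of_ne_zero ht
    rw [hk] at hprod ih ⊢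
    calc ((k + 1)! : R) * (∏ j ∈ t, x j + x a * ∑ i ∈ t, ∏ j ∈ t.erase i, x j)
        = (k + 1)! * ∏ j ∈ t, x j
          + (k + 1) * x a * (k ! * ∑ i ∈ t, ∏ j ∈ t.erase i, x j) := by
          push_cast [factorial_succ]; ring
      _ ≤ (∑ i ∈ t, x i) ^ (k + 1) + (k + 1) * x a * (∑ i ∈ t, x i) ^ k :=
          add_le_add hprod <| mul_le_mul_of_nonneg_left (by simpa using ih hxt)
            (mul_nonneg (add_nonneg (cast_nonneg _) zero_le_one) hxa)
      _ ≤ (x a + ∑ i ∈ t, x i) ^ (k + 1) := by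
          simpa [add_comm, mul_right_comm] using
            pow_add_mul_le_add_pow hS (add_nonneg (mul_nonneg zero_le_two hS) hxa) (k + 1)

end OrderedSemiring

theorem sum_le_inv_factorial_mul_sum_inv_pow_mul_prod [Field R] [LinearOrder R]
    [IsStrictOrderedRing R] [DecidableEq ι] {μ : ι → R} (s : Finset ι)
    (hμ : ∀ i ∈ s, 0 < μ i) :
    ∑ i ∈ s, μ i ≤ 1 / (#s - 1)! * (∑ i ∈ s, (μ i)⁻¹) ^ (#s - 1) * ∏ i ∈ s, μ i := by
  have hprod : 0 < ∏ i ∈ s, μ i := prod_pos hμ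
  have key :=
    factorial_mul_sum_prod_erase_le_sum_pow s fun i hi => (inv_pos.mpr (hμ i hi)).le
  rw [sum_prod_erase_inv s fun i hi => (hμ i hi).ne'] at key
  calc ∑ i ∈ s, μ i
      = 1 / (#s - 1)! * ((#s - 1)! * ((∑ i ∈ s, μ i) / ∏ i ∈ s, μ i)) * ∏ i ∈ s, μ i := by
        field_simp
    _ ≤ 1 / (#s - 1)! * (∑ i ∈ s, (μ i)⁻¹) ^ (#s - 1) * ∏ i ∈ s, μ i := by gcongr

end Finset

namespace Matrix

section Congruence

variable {n α : Type*} [Fintype n] [DecidableEq n] [CommRing α] [StarRing α]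
  {S : Matrix n n α}

theorem exists_eq_conjTranspose_mul_mul (hS : IsUnit S) (H : Matrix n n α) :
    ∃ M, H = Sᴴ * M * S := by
  refine ⟨(S⁻¹)ᴴ * H * S⁻¹, ?_⟩
  rw [conjTranspose_nonsing_inv, Matrix.mul_assoc, Matrix.mul_assoc,
    nonsing_inv_mul _ ((isUnit_iff_isUnit_det S).mp hS), Matrix.mul_one,
    mul_nonsing_inv_cancel_left _ _ ((isUnit_iff_isUnit_det Sᴴ).mp hS.star)]

theorem trace_conjTranspose_conj_inv_mul (hS : IsUnit S) (A B : Matrix n n α) :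
    trace ((Sᴴ * A * S)⁻¹ * (Sᴴ * B * S)) = trace (A⁻¹ * B) := by
  rw [mul_inv_rev, mul_inv_rev, ← trace_conj' hS (A⁻¹ * B)]
  simp only [Matrix.mul_assoc,
    nonsing_inv_mul_cancel_left _ _ ((isUnit_iff_isUnit_det Sᴴ).mp hS.star)]

end Congruence

variable {𝕜 n : Type*} [RCLike 𝕜] [Fintype n] [DecidableEq n] {A : Matrix n n 𝕜}

theorem re_det_conjTranspose_conj_div {S : Matrix n n 𝕜} (hS : IsUnit S) (M : Matrix n n 𝕜) :
    RCLike.re (Sᴴ * M * S).det / RCLike.re (Sᴴ * S).det = RCLike.re M.det := by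
  have hdet : ‖S.det‖ ≠ 0 := norm_ne_zero_iff.mpr ((isUnit_iff_isUnit_det S).mp hS).ne_zero
  rw [det_mul, det_mul, det_mul, det_conjTranspose, mul_right_comm, RCLike.star_def,
    RCLike.conj_mul, ← RCLike.ofReal_pow, RCLike.re_ofReal_mul, RCLike.ofReal_re,
    mul_div_cancel_left₀ _ (pow_ne_zero 2 hdet)]

theorem PosDef.exists_eq_conjTranspose_mul_self (hA : A.PosDef) :
    ∃ S : Matrix n n 𝕜, IsUnit S ∧ A = Sᴴ * S :=
  CStarAlgebra.isStrictlyPositive_iff_eq_star_mul_self.mp hA.isStrictlyPositive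

theorem IsHermitian.trace_cfc (hA : A.IsHermitian) (f : ℝ → ℝ) :
    (cfc f A).trace = ∑ i, (f (hA.eigenvalues i) : 𝕜) := by
  rw [hA.cfc_eq, IsHermitian.cfc, Unitary.conjStarAlgAut_apply, trace_mul_cycle,
    Unitary.coe_star_mul_self, one_mul, trace_diagonal]
  rfl

theorem IsHermitian.re_trace (hA : A.IsHermitian) :
    RCLike.re A.trace = ∑ i, hA.eigenvalues i := by
  simp only [hA.trace_eq_sum_eigenvalues, map_sum, RCLike.ofReal_re]

theorem IsHermitian.re_det (hA : A.IsHermitian) :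
    RCLike.re A.det = ∏ i, hA.eigenvalues i := by
  rw [hA.det_eq_prod_eigenvalues, ← RCLike.ofReal_prod, RCLike.ofReal_re]

theorem PosDef.re_trace_inv (hA : A.PosDef) :
    RCLike.re A⁻¹.trace = ∑ i, (hA.1.eigenvalues i)⁻¹ := by
  rw [nonsing_inv_eq_ringInverse, ← cfc_ringInverse_id (R := ℝ) A hA.isUnit, hA.1.trace_cfc]
  simp only [map_sum, RCLike.ofReal_re]

theorem PosDef.re_trace_le_inv_factorial_mul_re_trace_inv_pow_mul_re_det (hA : A.PosDef) :
    RCLike.re A.trace ≤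
      1 / (Fintype.card n - 1)! * RCLike.re A⁻¹.trace ^ (Fintype.card n - 1) *
        RCLike.re A.det := by
  rw [hA.1.re_trace, hA.re_trace_inv, hA.1.re_det]
  exact sum_le_inv_factorial_mul_sum_inv_pow_mul_prod univ fun i _ => hA.eigenvalues_pos i

end Matrix

theorem trace_det_estimate_general
    (n : ℕ)
    (G H : Matrix (Fin n) (Fin n) ℂ)
    (hG : G.PosDef) (hH : H.PosDef) :
    ((G⁻¹ * H).trace).re ≤
      (1 / ((n - 1).factorial : ℝ)) *
        (((H⁻¹ * G).trace).re) ^ (n - 1) * (H.det.re / G.det.re) := by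
  obtain ⟨S, hS, rfl⟩ := hG.exists_eq_conjTranspose_mul_self
  obtain ⟨M, rfl⟩ := exists_eq_conjTranspose_mul_mul hS H
  have hM : M.PosDef := (IsUnit.posDef_star_left_conjugate_iff hS).mp hH
  have htr := trace_conjTranspose_conj_inv_mul hS 1 M
  have htr_inv := trace_conjTranspose_conj_inv_mul hS M 1
  simp only [Matrix.mul_one, inv_one, Matrix.one_mul] at htr htr_inv
  have hdet := re_det_conjTranspose_conj_div hS M
  have key := hM.re_trace_le_inv_factorial_mul_re_trace_inv_pow_mul_re_det
  simp only [RCLike.re_to_complex, Fintype.card_fin] at hdet key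
  rwa [htr, htr_inv, hdet]

/-- For `n×n` Hermitian positive definite matrices `G` and `H`,
`Re(tr(G⁻¹·H)) ≤ (1/(n−1)!)·(Re(tr(H⁻¹·G)))^{n−1}·Re(det H)/Re(det G)`. -/
theorem trace_det_estimate
    (n : ℕ) (hn : 1 ≤ n)
    (G H : Matrix (Fin n) (Fin n) ℂ)
    (hG : G.PosDef) (hH : H.PosDef) :
    ((G⁻¹ * H).trace).re ≤
      (1 / ((n - 1).factorial : ℝ)) *
        (((H⁻¹ * G).trace).re) ^ (n - 1) * (H.det.re / G.det.re) :=
  trace_det_estimate_general n G H hG hH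
end
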